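/- arXiv:1802.06292 — 4 statements merged into one kernel-verified Lean document; each statement's English description precedes it below -/
import Mathlib

section
/- Let U_1, ..., U_n be independent real-valued random variables such that |U_j − E U_j| ≤ M almost surely for every j, and set h = M/3 and Ū = n^{−1} Σ_{j=1}^n U_j. Then for every t > 0 and all ε > 0, c ∈ (0,1) with 0 < εh ≤ c < 1, P( Ū − E Ū ≥ t/(nε) + nε·Var(Ū)/(2(1−c)) ) ≤ e^{−t}. -/
/-!
Chernoff's bound for the centred sum `S = ∑ j, (U j - E U j)` at the threshold `n · a`, where
`a = t/(nε) + nε·Var(Ū)/(2(1-c))`. On `|y| ≤ 3c` one has `exp y ≤ 1 + y + y²/(2(1-c))`, since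
`(k+2)! ≥ 2·3^k` makes the tail of the exponential series geometric with ratio `c`; integrating,
each centred term has `E exp(ε X) ≤ exp(ε² Var X/(2(1-c)))`. Independence multiplies these
bounds, the variances add up to `Var S = n² Var Ū`, and `a` is chosen so that the Chernoff
exponent `-ε n a + ε² n² Var Ū/(2(1-c))` equals `-t`.
-/

open MeasureTheory ProbabilityTheory Real
open scoped Nat

lemma two_mul_three_pow_le_factorial (n : ℕ) : 2 * 3 ^ n ≤ (n + 2)! := by
  induction n with
  | zero => decide
  | succ k ih =>
    rw [show k + 1 + 2 = k + 2 + 1 by ring, Nat.factorial_succ, pow_succ]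
    nlinarith

theorem Real.exp_le_one_add_add_sq_div {y c : ℝ} (hy : |y| ≤ 3 * c) (hc : c < 1) :
    exp y ≤ 1 + y + y ^ 2 / (2 * (1 - c)) := by
  have hc₀ : 0 ≤ c := by linarith [abs_nonneg y]
  have htail : HasSum (fun n : ℕ => y ^ (n + 2) / (n + 2)!) (exp y - (1 + y)) := by
    have := (hasSum_nat_add_iff' 2).2 (exp_eq_exp_ℝ ▸ NormedSpace.expSeries_div_hasSum_exp y)
    simpa [Finset.sum_range_succ] using this
  have hgeom : HasSum (fun n : ℕ => y ^ 2 / 2 * c ^ n) (y ^ 2 / 2 * (1 - c)⁻¹) :=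
    (hasSum_geometric_of_lt_one hc₀ hc).mul_left _
  have hterm (n : ℕ) : y ^ (n + 2) / (n + 2)! ≤ y ^ 2 / 2 * c ^ n := by
    have hfact : (2 * 3 ^ n : ℝ) ≤ (n + 2)! := by exact_mod_cast two_mul_three_pow_le_factorial n
    calc y ^ (n + 2) / (n + 2)! ≤ |y| ^ (n + 2) / (2 * 3 ^ n) :=
          div_le_div₀ (by positivity) ((le_abs_self _).trans (abs_pow y _).le) (by positivity) hfact
      _ = y ^ 2 / 2 * (|y| / 3) ^ n := by rw [pow_add, sq_abs, div_pow]; ring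
      _ ≤ y ^ 2 / 2 * c ^ n := by gcongr; linarith
  have := hasSum_le hterm htail hgeom
  rw [← div_eq_mul_inv, div_div] at this
  linarith

section

variable {Ω : Type*} [MeasurableSpace Ω] {μ : Measure Ω}

lemma integrable_of_abs_sub_integral_le [IsFiniteMeasure μ] {U : Ω → ℝ} {M : ℝ}
    (hU : AEStronglyMeasurable U μ) (hbd : ∀ᵐ ω ∂μ, |U ω - μ[U]| ≤ M) : Integrable U μ :=
  (memLp_of_bounded (a := μ[U] - M) (b := μ[U] + M)
    (hbd.mono fun _ hω => by constructor <;> linarith [abs_le.1 hω]) hU 1).integrable le_rfl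

lemma sum_sub_integral_eq_mul_average_sub {n : ℕ} (hn : n ≠ 0) {U : Fin n → Ω → ℝ}
    (hU : ∀ j, Integrable (U j) μ) (ω : Ω) :
    ∑ j, (U j ω - μ[U j]) = n * ((n : ℝ)⁻¹ * ∑ j, U j ω - ∫ ω', (n : ℝ)⁻¹ * ∑ j, U j ω' ∂μ) := by
  rw [integral_const_mul, integral_finsetSum _ fun j _ => hU j, Finset.sum_sub_distrib]
  field_simp

lemma mgf_le_exp_variance_of_abs_le [IsProbabilityMeasure μ] {X : Ω → ℝ} {M ε c : ℝ}
    (hX : AEMeasurable X μ) (hcent : μ[X] = 0) (hbd : ∀ᵐ ω ∂μ, |X ω| ≤ M) (hε : 0 ≤ ε)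
    (hεM : ε * M ≤ 3 * c) (hc : c < 1) : mgf X μ ε ≤ exp (ε ^ 2 * Var[X; μ] / (2 * (1 - c))) := by
  set q := ε ^ 2 / (2 * (1 - c))
  have hmem : MemLp X 2 μ := .of_bound hX.aestronglyMeasurable M hbd
  have hpt : ∀ᵐ ω ∂μ, exp (ε * X ω) ≤ 1 + ε * X ω + q * X ω ^ 2 := by
    filter_upwards [hbd] with ω hω
    have : |ε * X ω| ≤ 3 * c := by
      rw [abs_mul, abs_of_nonneg hε]
      exact (mul_le_mul_of_nonneg_left hω hε).trans hεM
    convert exp_le_one_add_add_sq_div this hc using 2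
    ring
  have hint₁ : Integrable (fun ω => 1 + ε * X ω) μ :=
    (integrable_const 1).add ((hmem.integrable one_le_two).const_mul ε)
  have hint₂ : Integrable (fun ω => q * X ω ^ 2) μ := hmem.integrable_sq.const_mul q
  calc mgf X μ ε ≤ ∫ ω, 1 + ε * X ω + q * X ω ^ 2 ∂μ :=
        integral_mono_of_nonneg (.of_forall fun _ => (exp_pos _).le)
          (hint₁.add hint₂) hpt
    _ = ε ^ 2 * Var[X; μ] / (2 * (1 - c)) + 1 := by
        rw [integral_add hint₁ hint₂, integral_add (integrable_const 1)
          ((hmem.integrable one_le_two).const_mul ε), integral_const_mul, integral_const_mul, hcent,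
          variance_of_integral_eq_zero hX hcent]
        simp only [integral_const, probReal_univ, smul_eq_mul, q]
        ring
    _ ≤ exp (ε ^ 2 * Var[X; μ] / (2 * (1 - c))) := add_one_le_exp _

theorem measureReal_sum_ge_le_exp_of_abs_le [IsProbabilityMeasure μ] {ι : Type*} [Fintype ι]
    {X : ι → Ω → ℝ} {M ε c : ℝ} (hindep : iIndepFun X μ) (hX : ∀ i, AEMeasurable (X i) μ)
    (hcent : ∀ i, μ[X i] = 0) (hbd : ∀ i, ∀ᵐ ω ∂μ, |X i ω| ≤ M) (hε : 0 ≤ ε)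
    (hεM : ε * M ≤ 3 * c) (hc : c < 1) (r : ℝ) :
    μ.real {ω | r ≤ ∑ i, X i ω} ≤ exp (-ε * r + ε ^ 2 * Var[∑ i, X i; μ] / (2 * (1 - c))) := by
  have hvar : Var[∑ i, X i; μ] = ∑ i, Var[X i; μ] :=
    IndepFun.variance_sum (fun i _ => .of_bound (hX i).aestronglyMeasurable M (hbd i))
      (fun i _ j _ hij => hindep.indepFun hij)
  have hmgf : mgf (∑ i, X i) μ ε ≤ exp (ε ^ 2 * Var[∑ i, X i; μ] / (2 * (1 - c))) := by
    rw [hindep.mgf_sum₀ hX, hvar, Finset.mul_sum, Finset.sum_div, exp_sum]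
    exact Finset.prod_le_prod (fun _ _ => mgf_nonneg)
      fun i _ => mgf_le_exp_variance_of_abs_le (hX i) (hcent i) (hbd i) hε hεM hc
  have hint : Integrable (fun ω => exp (ε * (∑ i, X i) ω)) μ := by
    refine integrable_exp_mul_of_le ε (∑ _i : ι, M) hε
      (Finset.aemeasurable_sum _ fun i _ => hX i) ?_
    filter_upwards [ae_all_iff.2 hbd] with ω hω
    simpa only [Finset.sum_apply] using
      Finset.sum_le_sum fun i _ => (le_abs_self (X i ω)).trans (hω i)
  calc μ.real {ω | r ≤ ∑ i, X i ω} ≤ exp (-ε * r) * mgf (∑ i, X i) μ ε := by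
        simpa only [Finset.sum_apply] using measure_ge_le_exp_mul_mgf r hε hint
    _ ≤ exp (-ε * r) * exp (ε ^ 2 * Var[∑ i, X i; μ] / (2 * (1 - c))) := by gcongr
    _ = _ := (exp_add _ _).symm

end

theorem craig_bernstein_inequality_general
    {Ω : Type*} [MeasurableSpace Ω] (μ : Measure Ω) [IsProbabilityMeasure μ]
    (n : ℕ) (hn : 0 < n) (U : Fin n → Ω → ℝ) (M : ℝ)
    (hmeas : ∀ j, Measurable (U j))
    (hindep : iIndepFun U μ)
    (hbdd : ∀ j, ∀ᵐ ω ∂μ, |U j ω - ∫ ω', U j ω' ∂μ| ≤ M)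
    (t ε c : ℝ)
    (hεh : 0 < ε * (M / 3)) (hc : ε * (M / 3) ≤ c) (hc1 : c < 1) :
    μ {ω | (n : ℝ)⁻¹ * ∑ j, U j ω - (∫ ω', (n : ℝ)⁻¹ * ∑ j, U j ω' ∂μ) ≥
        t / (n * ε) +
          n * ε * variance (fun ω' => (n : ℝ)⁻¹ * ∑ j, U j ω') μ / (2 * (1 - c))} ≤
      ENNReal.ofReal (Real.exp (-t)) := by
  have hU (j : Fin n) : Integrable (U j) μ :=
    integrable_of_abs_sub_integral_le (hmeas j).aestronglyMeasurable (hbdd j)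
  set Ubar : Ω → ℝ := fun ω => (n : ℝ)⁻¹ * ∑ j, U j ω
  set X : Fin n → Ω → ℝ := fun j ω => U j ω - μ[U j]
  set a := t / (n * ε) + n * ε * Var[Ubar; μ] / (2 * (1 - c)) with ha
  have hsum (ω : Ω) : ∑ j, X j ω = n * (Ubar ω - μ[Ubar]) :=
    sum_sub_integral_eq_mul_average_sub hn.ne' hU ω
  have hnR : (0 : ℝ) < n := Nat.cast_pos.2 hn
  have hε : 0 < ε := by
    obtain ⟨_, hω⟩ := (hbdd ⟨0, hn⟩).exists
    exact pos_of_mul_pos_left hεh (by linarith [(abs_nonneg _).trans hω])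
  have hcent (j : Fin n) : μ[X j] = 0 := by
    simp [X, integral_sub (hU j) (integrable_const _)]
  have hXindep : iIndepFun X μ :=
    hindep.comp (fun j x => x - ∫ ω, U j ω ∂μ) fun j => measurable_sub_const _
  have hvar : Var[∑ j, X j; μ] = n ^ 2 * Var[Ubar; μ] := by
    rw [show ∑ j, X j = fun ω => n * (Ubar ω - μ[Ubar]) from
        funext fun ω => by simp only [Finset.sum_apply, hsum],
      variance_const_mul, variance_sub_const (by fun_prop)]
  calc μ {ω | Ubar ω - μ[Ubar] ≥ a} = μ {ω | n * a ≤ ∑ j, X j ω} := by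
        congr 1
        ext ω
        simp only [Set.mem_ofPred_eq, hsum, ge_iff_le, mul_le_mul_iff_right₀ hnR]
    _ ≤ ENNReal.ofReal (exp (-ε * (n * a) + ε ^ 2 * Var[∑ j, X j; μ] / (2 * (1 - c)))) :=
        (ENNReal.le_ofReal_iff_toReal_le (measure_ne_top _ _) (exp_nonneg _)).2 <|
          measureReal_sum_ge_le_exp_of_abs_le hXindep
            (fun j => ((hmeas j).sub_const _).aemeasurable) hcent hbdd hε.le (by nlinarith) hc1 _
    _ = ENNReal.ofReal (exp (-t)) := by
        have : 1 - c ≠ 0 := by linarith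
        rw [hvar, ha]
        congr 2
        field_simp
        ring

/-- Craig's refinement of Bernstein's inequality. If `U_1,...,U_n` are
independent with `|U_j − E U_j| ≤ M` a.s., `h = M/3`, `Ū = n⁻¹ Σ_j U_j`, then for all
`t > 0` and `0 < εh ≤ c < 1`,
`P(Ū − EŪ ≥ t/(nε) + nε·Var(Ū)/(2(1−c))) ≤ e^{−t}`. -/
theorem craig_bernstein_inequality
    {Ω : Type*} [MeasurableSpace Ω] (μ : Measure Ω) [IsProbabilityMeasure μ]
    (n : ℕ) (hn : 0 < n) (U : Fin n → Ω → ℝ) (M : ℝ)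
    (hmeas : ∀ j, Measurable (U j))
    (hindep : iIndepFun U μ)
    (hbdd : ∀ j, ∀ᵐ ω ∂μ, |U j ω - ∫ ω', U j ω' ∂μ| ≤ M)
    (t ε c : ℝ) (ht : 0 < t)
    (hεh : 0 < ε * (M / 3)) (hc : ε * (M / 3) ≤ c) (hc1 : c < 1) :
    μ {ω | (n : ℝ)⁻¹ * ∑ j, U j ω - (∫ ω', (n : ℝ)⁻¹ * ∑ j, U j ω' ∂μ) ≥
        t / (n * ε) +
          n * ε * variance (fun ω' => (n : ℝ)⁻¹ * ∑ j, U j ω') μ / (2 * (1 - c))} ≤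
      ENNReal.ofReal (Real.exp (-t)) :=
  craig_bernstein_inequality_general μ n hn U M hmeas hindep hbdd t ε c hεh hc hc1
end

section
/- Let q ≥ 2 and n ≥ 1 be integers and let p ∈ [0, 1 − 1/q] be such that d = pn is an integer. Then there exists a set C ⊆ {0, 1, ..., q−1}^n with cardinality |C| ≥ q^{n(1 − h_q(p))} such that any two distinct elements of C differ in at least d + 1 coordinates (i.e., C is a q-ary code of block length n with minimal Hamming distance at least d + 1). -/
open BigOperators

/-- The q-ary entropy function `h_q(p)`, with the convention `0·log 0 = 0`
(note `Real.logb q 0 = 0` in Mathlib, so the convention is automatic). -/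
noncomputable def qaryEntropy (q : ℕ) (p : ℝ) : ℝ :=
  p * Real.logb q (q - 1) - p * Real.logb q p - (1 - p) * Real.logb q (1 - p)

/-!
A code of minimal distance `d + 1` that cannot be enlarged is covered by the Hamming balls of
radius `d` around its words, so it has at least `q ^ n / V` words, `V` the volume of such a ball.
To bound `V`, weight each word `y` by `r ^ dist(x, y) * s ^ (n - dist(x, y))` with
`r = p / (q - 1)` and `s = 1 - p`: the total weight is `(s + (q - 1) r) ^ n = 1`, and since
`r ≤ s` (this is `p ≤ 1 - 1/q`) every word of the ball around `x` weighs at least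
`r ^ d * s ^ (n - d)`, which equals `q ^ (-n h_q(p))` when `d = p n`.
-/

open Finset

theorem pow_sub_mul_pow_le_pow_sub_mul_pow {R : Type*} [CommSemiring R] [PartialOrder R]
    [IsOrderedRing R] {r s : R} (hr : 0 ≤ r) (hrs : r ≤ s) {k d n : ℕ} (hkd : k ≤ d)
    (hdn : d ≤ n) : s ^ (n - d) * r ^ d ≤ s ^ (n - k) * r ^ k := by
  have hs : 0 ≤ s := hr.trans hrs
  calc s ^ (n - d) * r ^ d = s ^ (n - d) * r ^ (d - k) * r ^ k := by
        rw [mul_assoc, ← pow_add, Nat.sub_add_cancel hkd]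
    _ ≤ s ^ (n - d) * s ^ (d - k) * r ^ k := by gcongr
    _ = s ^ (n - k) * r ^ k := by rw [← pow_add]; congr 2; omega

section Hamming

variable {ι α : Type*} [Fintype ι] [DecidableEq α]

theorem exists_maximal_code [Fintype α] (d : ℕ) :
    ∃ C : Finset (ι → α),
      (∀ x ∈ C, ∀ y ∈ C, x ≠ y → d + 1 ≤ hammingDist x y) ∧
      ∀ x : ι → α, ∃ c ∈ C, hammingDist c x ≤ d := by
  classical
  let IsCode : Finset (ι → α) → Prop :=
    fun C => ∀ x ∈ C, ∀ y ∈ C, x ≠ y → d + 1 ≤ hammingDist x y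
  obtain ⟨C, hC, hmax⟩ := exists_max_image {C | IsCode C} card ⟨∅, by simp [IsCode]⟩
  rw [mem_filter] at hC
  refine ⟨C, hC.2, fun x => ?_⟩
  by_contra! hfar
  have hxC : x ∉ C := fun hx => by simpa using hfar x hx
  have hcode : IsCode (insert x C) := by
    simp only [IsCode, mem_insert]
    rintro a (rfl | ha) b (rfl | hb) hab
    · exact absurd rfl hab
    · rw [hammingDist_comm]; exact hfar b hb
    · exact hfar a ha
    · exact hC.2 a ha b hb hab
  have := hmax _ (mem_filter.mpr ⟨mem_univ _, hcode⟩)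
  rw [card_insert_of_notMem hxC] at this
  omega

theorem card_le_sum_card_hammingBall [DecidableEq ι] [Fintype α] {C : Finset (ι → α)}
    {d : ℕ} (hcover : ∀ x : ι → α, ∃ c ∈ C, hammingDist c x ≤ d) :
    Fintype.card α ^ Fintype.card ι ≤ ∑ c ∈ C, #{y | hammingDist c y ≤ d} :=
  calc Fintype.card α ^ Fintype.card ι = #(univ : Finset (ι → α)) := by simp
    _ ≤ #(C.biUnion fun c => {y | hammingDist c y ≤ d}) := card_le_card fun x _ => by
        obtain ⟨c, hc, hcx⟩ := hcover x
        exact mem_biUnion.mpr ⟨c, hc, by simpa using hcx⟩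
    _ ≤ _ := card_biUnion_le

theorem prod_ite_eq_pow_hammingDist {R : Type*} [CommMonoid R] (x y : ι → α) (a b : R) :
    ∏ i, (if y i = x i then a else b) =
      a ^ (Fintype.card ι - hammingDist x y) * b ^ hammingDist x y := by
  have hdist : hammingDist x y = #{i | ¬ y i = x i} := by
    simp only [hammingDist, ne_comm]
  rw [prod_ite, prod_const, prod_const, hdist, ← card_univ,
    ← card_filter_add_card_filter_not (s := univ) (fun i => y i = x i), Nat.add_sub_cancel]

theorem card_hammingBall_mul_le [DecidableEq ι] [Fintype α] (x : ι → α) {d : ℕ}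
    (hd : d ≤ Fintype.card ι) {r s : ℝ} (hr : 0 ≤ r) (hrs : r ≤ s) :
    #{y | hammingDist x y ≤ d} * (s ^ (Fintype.card ι - d) * r ^ d) ≤
      (s + (Fintype.card α - 1) * r) ^ Fintype.card ι := by
  set weight : (ι → α) → ℝ := fun y => ∏ i, if y i = x i then s else r
  have hweight_nonneg : ∀ y, 0 ≤ weight y := fun y =>
    prod_nonneg fun i _ => by split_ifs <;> linarith
  have hweight_ball : ∀ y, hammingDist x y ≤ d →
      s ^ (Fintype.card ι - d) * r ^ d ≤ weight y := fun y hy => by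
    dsimp only [weight]
    rw [prod_ite_eq_pow_hammingDist]
    exact pow_sub_mul_pow_le_pow_sub_mul_pow hr hrs hy hd
  have hsum_coord : ∀ b : α,
      ∑ a, (if a = b then s else r) = s + (Fintype.card α - 1) * r := by
    intro b
    rw [← add_sum_erase _ _ (mem_univ b), if_pos rfl,
      sum_congr rfl fun a ha => if_neg (ne_of_mem_erase ha), sum_const,
      card_erase_of_mem (mem_univ b), nsmul_eq_mul, card_univ,
      Nat.cast_pred (Fintype.card_pos_iff.2 ⟨b⟩)]
  calc (#{y | hammingDist x y ≤ d} : ℝ) * (s ^ (Fintype.card ι - d) * r ^ d)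
      = ∑ y ∈ {y | hammingDist x y ≤ d}, s ^ (Fintype.card ι - d) * r ^ d := by
        rw [sum_const, nsmul_eq_mul]
    _ ≤ ∑ y ∈ {y | hammingDist x y ≤ d}, weight y :=
        sum_le_sum fun y hy => hweight_ball y (mem_filter.1 hy).2
    _ ≤ ∑ y, weight y :=
        sum_le_sum_of_subset_of_nonneg (filter_subset _ _) fun y _ _ => hweight_nonneg y
    _ = ∏ i, ∑ a, (if a = x i then s else r) :=
        (Fintype.prod_sum fun i a => if a = x i then s else r).symm
    _ = (s + (Fintype.card α - 1) * r) ^ Fintype.card ι := by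
        simp only [hsum_coord, prod_const, card_univ]

end Hamming

theorem rpow_mul_qaryEntropy_mul_eq_one {q : ℕ} (hq : 1 < q) {p : ℝ} (hp0 : 0 ≤ p)
    (hp1 : p < 1) {n d : ℕ} (hd : (d : ℝ) = p * n) :
    (q : ℝ) ^ (n * qaryEntropy q p) * ((1 - p) ^ (n - d) * (p / (q - 1)) ^ d) = 1 := by
  have hq1 : (1 : ℝ) < q := by exact_mod_cast hq
  rcases hp0.eq_or_lt with rfl | hp
  · obtain rfl : d = 0 := by exact_mod_cast (by simpa using hd : (d : ℝ) = 0)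
    simp [qaryEntropy]
  have hdn : d ≤ n := by
    exact_mod_cast hd.trans_le (mul_le_of_le_one_left n.cast_nonneg hp1.le)
  have hm : 0 < (1 - p) ^ (n - d) * (p / (q - 1)) ^ d := by
    have : (0 : ℝ) < q - 1 := by linarith
    have : 0 < 1 - p := by linarith
    positivity
  have hexp : n * qaryEntropy q p = -Real.logb q ((1 - p) ^ (n - d) * (p / (q - 1)) ^ d) := by
    rw [Real.logb_mul (by positivity) (by positivity), Real.logb_pow, Real.logb_pow,
      Real.logb_div hp.ne' (by linarith), Nat.cast_sub hdn, qaryEntropy, hd]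
    ring
  rw [hexp, Real.rpow_neg (by positivity), Real.rpow_logb (by positivity) hq1.ne' hm,
    inv_mul_cancel₀ hm.ne']

theorem card_hammingBall_le_rpow_qaryEntropy {q n d : ℕ} (hq : 2 ≤ q) {p : ℝ} (hp0 : 0 ≤ p)
    (hp1 : p ≤ 1 - 1 / q) (hd : (d : ℝ) = p * n) (x : Fin n → Fin q) :
    (#{y | hammingDist x y ≤ d} : ℝ) ≤ q ^ (n * qaryEntropy q p) := by
  have hq1 : (1 : ℝ) < q := by exact_mod_cast hq
  have hp_lt_one : p < 1 := hp1.trans_lt (sub_lt_self 1 (by positivity))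
  have hdn : d ≤ n := by
    exact_mod_cast hd.trans_le (mul_le_of_le_one_left n.cast_nonneg hp_lt_one.le)
  have hrs : p / (q - 1) ≤ 1 - p := by
    have hqp : q * p ≤ q - 1 := by
      simpa [mul_sub, mul_inv_cancel₀ (by positivity : (q : ℝ) ≠ 0)]
        using mul_le_mul_of_nonneg_left hp1 (by positivity : (0 : ℝ) ≤ q)
    rw [div_le_iff₀ (by linarith)]
    linarith
  have hvolume := card_hammingBall_mul_le x (by simpa using hdn) (by positivity) hrs
  rw [Fintype.card_fin, Fintype.card_fin, mul_div_cancel₀ _ (by linarith), sub_add_cancel,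
    one_pow] at hvolume
  have hentropy := rpow_mul_qaryEntropy_mul_eq_one (by omega : 1 < q) hp0 hp_lt_one hd
  calc (#{y | hammingDist x y ≤ d} : ℝ)
      = #{y | hammingDist x y ≤ d} * ((1 - p) ^ (n - d) * (p / (q - 1)) ^ d) *
          q ^ (n * qaryEntropy q p) := by
        rw [mul_assoc, mul_comm _ (_ ^ _ : ℝ), hentropy, mul_one]
    _ ≤ 1 * q ^ (n * qaryEntropy q p) := by gcongr
    _ = q ^ (n * qaryEntropy q p) := one_mul _

theorem gilbert_varshamov_bound_general (q n d : ℕ) (hq : 2 ≤ q) (p : ℝ)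
    (hp0 : 0 ≤ p) (hp1 : p ≤ 1 - 1 / q) (hd : (d : ℝ) = p * n) :
    ∃ C : Finset (Fin n → Fin q),
      (q : ℝ) ^ ((n : ℝ) * (1 - qaryEntropy q p)) ≤ (C.card : ℝ) ∧
      ∀ x ∈ C, ∀ y ∈ C, x ≠ y → d + 1 ≤ hammingDist x y := by
  obtain ⟨C, hcode, hcover⟩ := exists_maximal_code (ι := Fin n) (α := Fin q) d
  refine ⟨C, ?_, hcode⟩
  have hcard : (q : ℝ) ^ n ≤ #C * q ^ (n * qaryEntropy q p) :=
    calc (q : ℝ) ^ n ≤ ∑ c ∈ C, (#{y | hammingDist c y ≤ d} : ℝ) := by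
          exact_mod_cast by simpa using card_le_sum_card_hammingBall hcover
      _ ≤ _ := by
          simpa using sum_le_sum fun c _ => card_hammingBall_le_rpow_qaryEntropy hq hp0 hp1 hd c
  rw [mul_one_sub, Real.rpow_sub (by positivity), Real.rpow_natCast, div_le_iff₀ (by positivity)]
  exact hcard

/-- the Gilbert–Varshamov bound. For `q ≥ 2`, `n ≥ 1` and
`p ∈ [0, 1 − 1/q]` with `d = pn` an integer, there is a `q`-ary code of block
length `n`, minimal Hamming distance at least `d + 1`, and cardinality at least
`q^{n(1 − h_q(p))}`. -/
theorem gilbert_varshamov_bound (q n d : ℕ) (hq : 2 ≤ q) (hn : 1 ≤ n) (p : ℝ)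
    (hp0 : 0 ≤ p) (hp1 : p ≤ 1 - 1 / q) (hd : (d : ℝ) = p * n) :
    ∃ C : Finset (Fin n → Fin q),
      (q : ℝ) ^ ((n : ℝ) * (1 - qaryEntropy q p)) ≤ (C.card : ℝ) ∧
      ∀ x ∈ C, ∀ y ∈ C, x ≠ y → d + 1 ≤ hammingDist x y :=
  gilbert_varshamov_bound_general q n d hq p hp0 hp1 hd
end

section
/- Let β, L > 0 with ℓ = ⌊β⌋, let f ∈ Σ(β,L), and let K : ℝ → ℝ be an integrable kernel supported on [−1,1] of order ℓ, i.e., ∫ K(u) du = 1 and ∫ uʲ K(u) du = 0 for j = 1, ..., ℓ. Then for every h ∈ (0, 1/2] and every t₀ ∈ [h, 1−h], | (1/h)·∫₀¹ K((τ − t₀)/h)·f(τ) dτ − f(t₀) | ≤ (L·h^β/ℓ!)·∫_{−1}^{1} |K(u)|·|u|^β du. -/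
open MeasureTheory Set

/-!
Substituting `τ = t₀ + h u` turns the smoothed value into `∫ K(u) f(t₀ + h u) du`. Because `K` has
mass one and annihilates `u, …, u^ℓ`, it reproduces `f(t₀)` from the degree-`ℓ` Taylor polynomial
`T` of `f` at `t₀`, so the bias is `∫ K(u) (f − T)(t₀ + h u) du`. Writing the Lagrange remainder of
order `ℓ - 1` as `(f^(ℓ)(ξ) − f^(ℓ)(t₀)) (x − t₀)^ℓ / ℓ!`, the Hölder condition on `f^(ℓ)` bounds
`|f − T|(t₀ + h u)` by `L h^β |u|^β / ℓ!`.
-/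

def HolderClassR (β L : ℝ) (f : ℝ → ℝ) : Prop :=
  (∀ k < ⌊β⌋₊, DifferentiableOn ℝ (iteratedDeriv k f) (Icc (0:ℝ) 1)) ∧
  ∀ x ∈ Icc (0:ℝ) 1, ∀ y ∈ Icc (0:ℝ) 1,
    |iteratedDeriv ⌊β⌋₊ f x - iteratedDeriv ⌊β⌋₊ f y| ≤ L * |x - y| ^ (β - (⌊β⌋₊ : ℝ))

theorem iteratedDerivWithin_eqOn_iteratedDeriv {𝕜 F : Type*} [NontriviallyNormedField 𝕜]
    [NormedAddCommGroup F] [NormedSpace 𝕜 F] {f : 𝕜 → F} {s : Set 𝕜} {n : ℕ}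
    (hs : UniqueDiffOn 𝕜 s) (hd : ∀ k < n, ∀ x ∈ s, DifferentiableAt 𝕜 (iteratedDeriv k f) x) :
    EqOn (iteratedDerivWithin n f s) (iteratedDeriv n f) s := by
  induction n with
  | zero => simp [EqOn]
  | succ n ih =>
    intro x hx
    have hEq : EqOn (iteratedDerivWithin n f s) (iteratedDeriv n f) s :=
      ih fun k hk => hd k (Nat.lt_succ_of_lt hk)
    rw [iteratedDerivWithin_succ, derivWithin_congr hEq (hEq hx),
      (hd n n.lt_succ_self x hx).derivWithin (hs x hx), iteratedDeriv_succ]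

section Taylor

variable {E : Type*} [NormedAddCommGroup E] [NormedSpace ℝ E]

theorem taylorWithinEval_congr_set {f : ℝ → E} {n : ℕ} {s t : Set ℝ} {x₀ : ℝ}
    (h : ∀ k ≤ n, iteratedDerivWithin k f s x₀ = iteratedDerivWithin k f t x₀) (x : ℝ) :
    taylorWithinEval f n s x₀ x = taylorWithinEval f n t x₀ x := by
  simp only [taylor_within_apply]
  exact Finset.sum_congr rfl fun k hk => by rw [h k (Nat.lt_succ_iff.mp (Finset.mem_range.mp hk))]

theorem continuous_taylorWithinEval (f : ℝ → E) (n : ℕ) (s : Set ℝ) (x₀ : ℝ) :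
    Continuous (taylorWithinEval f n s x₀) := by
  simp_rw [funext (taylor_within_apply f n s x₀)]
  fun_prop

end Taylor

/-- Lagrange's remainder of order `n - 1` with the `n`-th Taylor term moved to the right. Unlike
`taylor_mean_remainder_lagrange_iteratedDeriv`, it does not need `iteratedDeriv n f` to be
continuous. -/
theorem exists_sub_taylorWithinEval_eq {f : ℝ → ℝ} {n : ℕ} {x₀ x : ℝ}
    (hd : ∀ k < n, ∀ y ∈ uIcc x₀ x, DifferentiableAt ℝ (iteratedDeriv k f) y) :
    ∃ ξ ∈ uIcc x₀ x, f x - taylorWithinEval f n univ x₀ x =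
      (iteratedDeriv n f ξ - iteratedDeriv n f x₀) * (x - x₀) ^ n / n.factorial := by
  rcases n with _ | m
  · exact ⟨x, right_mem_uIcc, by simp⟩
  rcases eq_or_ne x₀ x with rfl | hne
  · exact ⟨x₀, left_mem_uIcc, by simp⟩
  have hEq : ∀ k ≤ m + 1, EqOn (iteratedDerivWithin k f (uIcc x₀ x)) (iteratedDeriv k f)
      (uIcc x₀ x) := fun k hk =>
    iteratedDerivWithin_eqOn_iteratedDeriv (uniqueDiffOn_uIcc hne) fun j hj => hd j (by omega)
  have hdiff : ∀ k < m + 1, DifferentiableOn ℝ (iteratedDerivWithin k f (uIcc x₀ x)) (uIcc x₀ x) :=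
    fun k hk => DifferentiableOn.congr (fun y hy => (hd k hk y hy).differentiableWithinAt)
      (hEq k hk.le)
  have hC : ContDiffOn ℝ m f (uIcc x₀ x) :=
    contDiffOn_of_differentiableOn_deriv fun k hk => hdiff k (by norm_cast at hk; omega)
  obtain ⟨ξ, hξ, hrem⟩ :=
    taylor_mean_remainder_lagrange hne hC ((hdiff m m.lt_succ_self).mono Ioo_subset_Icc_self)
  have hξ' : ξ ∈ uIcc x₀ x := Ioo_subset_Icc_self hξ
  refine ⟨ξ, hξ', ?_⟩
  rw [hEq (m + 1) le_rfl hξ'] at hrem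
  rw [taylorWithinEval_succ, iteratedDerivWithin_univ, sub_add_eq_sub_sub,
    taylorWithinEval_congr_set (t := uIcc x₀ x) (fun k hk => by
      rw [iteratedDerivWithin_univ, hEq k (by omega) left_mem_uIcc]),
    hrem, Nat.factorial_succ, smul_eq_mul]
  push_cast
  field_simp

theorem continuousOn_of_dist_le_rpow {X Y : Type*} [PseudoMetricSpace X] [PseudoMetricSpace Y]
    {f : X → Y} {s : Set X} {C r : ℝ} (hr : 0 < r)
    (h : ∀ x ∈ s, ∀ y ∈ s, dist (f x) (f y) ≤ C * dist x y ^ r) : ContinuousOn f s := by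
  intro x hx
  rw [ContinuousWithinAt, tendsto_iff_dist_tendsto_zero]
  have hlim : Filter.Tendsto (fun y => C * dist y x ^ r) (nhdsWithin x s) (nhds 0) := by
    have : Continuous fun y => C * dist y x ^ r :=
      continuous_const.mul ((continuous_id.dist continuous_const).rpow_const fun _ => Or.inr hr.le)
    simpa [Real.zero_rpow hr.ne'] using (this.tendsto x).mono_left nhdsWithin_le_nhds
  exact squeeze_zero' (Filter.Eventually.of_forall fun _ => dist_nonneg)
    (Filter.eventually_of_mem self_mem_nhdsWithin fun y hy => h y hy x hx) hlim

namespace HolderClassR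

variable {β L : ℝ} {f : ℝ → ℝ}

theorem continuousOn (hβ : 0 < β) (hf : HolderClassR β L f) : ContinuousOn f (Icc 0 1) := by
  rcases Nat.eq_zero_or_pos ⌊β⌋₊ with h0 | hpos
  · refine continuousOn_of_dist_le_rpow (C := L) hβ fun x hx y hy => ?_
    simpa [h0, Real.dist_eq] using hf.2 x hx y hy
  · simpa using (hf.1 0 hpos).continuousOn

theorem abs_sub_taylorWithinEval_le (hβ : 0 < β) (hL : 0 ≤ L) (hf : HolderClassR β L f)
    {t₀ x : ℝ} (ht₀ : t₀ ∈ Ioo 0 1) (hx : x ∈ Ioo 0 1) :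
    |f x - taylorWithinEval f ⌊β⌋₊ univ t₀ x| ≤ L * |x - t₀| ^ β / (⌊β⌋₊).factorial := by
  have hsub : uIcc t₀ x ⊆ Ioo 0 1 := ordConnected_Ioo.uIcc_subset ht₀ hx
  obtain ⟨ξ, hξ, hrem⟩ := exists_sub_taylorWithinEval_eq (f := f) (n := ⌊β⌋₊)
    fun k hk y hy => (hf.1 k hk y (Ioo_subset_Icc_self (hsub hy))).differentiableAt
      (Icc_mem_nhds (hsub hy).1 (hsub hy).2)
  have hℓ : (⌊β⌋₊ : ℝ) ≤ β := Nat.floor_le hβ.le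
  rw [hrem, abs_div, abs_mul, abs_pow, Nat.abs_cast]
  gcongr ?_ / _
  calc |iteratedDeriv ⌊β⌋₊ f ξ - iteratedDeriv ⌊β⌋₊ f t₀| * |x - t₀| ^ ⌊β⌋₊
      ≤ L * |ξ - t₀| ^ (β - ⌊β⌋₊) * |x - t₀| ^ ⌊β⌋₊ := by
        gcongr
        exact hf.2 ξ (Ioo_subset_Icc_self (hsub hξ)) t₀ (Ioo_subset_Icc_self ht₀)
    _ ≤ L * |x - t₀| ^ (β - ⌊β⌋₊) * |x - t₀| ^ ⌊β⌋₊ := by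
        gcongr L * ?_ * _
        exact Real.rpow_le_rpow (abs_nonneg _) (abs_sub_left_of_mem_uIcc hξ) (by linarith)
    _ = L * |x - t₀| ^ β := by
        rw [mul_assoc, ← Real.rpow_natCast, ← Real.rpow_add' (abs_nonneg _) (by linarith),
          sub_add_cancel]

theorem abs_sub_taylorWithinEval_add_mul_le (hβ : 0 < β) (hL : 0 ≤ L) (hf : HolderClassR β L f)
    {t₀ h u : ℝ} (hh : 0 < h) (ht₀ : t₀ ∈ Ioo 0 1) (hx : t₀ + h * u ∈ Ioo 0 1) :
    |f (t₀ + h * u) - taylorWithinEval f ⌊β⌋₊ univ t₀ (t₀ + h * u)| ≤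
      L * h ^ β / (⌊β⌋₊).factorial * |u| ^ β := by
  have hbound := hf.abs_sub_taylorWithinEval_le hβ hL ht₀ hx
  rw [add_sub_cancel_left, abs_mul, Real.mul_rpow (abs_nonneg _) (abs_nonneg _),
    abs_of_pos hh] at hbound
  exact hbound.trans_eq (by ring)

end HolderClassR

section Integrals

variable {E : Type*} [NormedAddCommGroup E] [NormedSpace ℝ E]

theorem intervalIntegral.integral_eq_integral_of_forall_notMem_Icc {g : ℝ → E} {a b : ℝ}
    (hab : a ≤ b) (hg : ∀ u ∉ Icc a b, g u = 0) : ∫ u in a..b, g u = ∫ u, g u := by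
  rw [intervalIntegral.integral_of_le hab, ← integral_Icc_eq_integral_Ioc,
    setIntegral_eq_integral_of_forall_compl_eq_zero hg]

theorem intervalIntegral.integral_comp_sub_div_of_forall_notMem_Icc {g : ℝ → E}
    (hg : ∀ u ∉ Icc (-1 : ℝ) 1, g u = 0) {a b h t₀ : ℝ} (hh : 0 < h) (ha : a ≤ t₀ - h)
    (hb : t₀ + h ≤ b) : ∫ τ in a..b, g ((τ - t₀) / h) = h • ∫ u in (-1 : ℝ)..1, g u := by
  have hg' : ∀ τ ∉ Icc a b, g ((τ - t₀) / h) = 0 := fun τ hτ => hg _ fun ⟨h₁, h₂⟩ => hτ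
    ⟨by linarith [(le_div_iff₀ hh).mp h₁], by linarith [(div_le_iff₀ hh).mp h₂]⟩
  rw [integral_eq_integral_of_forall_notMem_Icc (by linarith : a ≤ b) hg',
    integral_eq_integral_of_forall_notMem_Icc (by norm_num : (-1 : ℝ) ≤ 1) hg,
    integral_sub_right_eq_self (fun y => g (y / h)) t₀, Measure.integral_comp_div,
    abs_of_pos hh]

theorem abs_intervalIntegral_mul_le {K r w : ℝ → ℝ} {a b : ℝ} (hab : a ≤ b)
    (hK : IntervalIntegrable K volume a b) (hw : ContinuousOn w (Icc a b))
    (hr : ∀ u ∈ Ioo a b, |r u| ≤ w u) :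
    |∫ u in a..b, K u * r u| ≤ ∫ u in a..b, |K u| * w u := by
  rw [← Real.norm_eq_abs]
  refine intervalIntegral.norm_integral_le_of_norm_le hab ?_
    (hK.abs.mul_continuousOn (by rwa [uIcc_of_le hab]))
  filter_upwards [Measure.ae_ne volume b] with u hub hu
  rw [Real.norm_eq_abs, abs_mul]
  exact mul_le_mul_of_nonneg_left (hr u ⟨hu.1, lt_of_le_of_ne hu.2 hub⟩) (abs_nonneg _)

end Integrals

section Kernel

variable {K : ℝ → ℝ}

theorem kernelSmooth_eq_intervalIntegral_mul_comp (hKsupp : ∀ u, u ∉ Icc (-1 : ℝ) 1 → K u = 0)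
    (f : ℝ → ℝ) {h t₀ : ℝ} (hh : 0 < h) (ht₀ : t₀ ∈ Icc h (1 - h)) :
    (1 / h) * ∫ τ in (0 : ℝ)..1, K ((τ - t₀) / h) * f τ =
      ∫ u in (-1 : ℝ)..1, K u * f (t₀ + h * u) := by
  have hcomp := intervalIntegral.integral_comp_sub_div_of_forall_notMem_Icc
    (g := fun u => K u * f (t₀ + h * u)) (fun u hu => by simp only [hKsupp u hu, zero_mul]) hh
    (a := 0) (b := 1) (t₀ := t₀) (by linarith [ht₀.1]) (by linarith [ht₀.2])
  simp only [mul_div_cancel₀ _ hh.ne', add_sub_cancel, smul_eq_mul] at hcomp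
  rw [hcomp, one_div, inv_mul_cancel_left₀ hh.ne']

theorem intervalIntegral_mul_sum_pow_eq_of_moments (hK : IntervalIntegrable K volume (-1) 1)
    (hKsupp : ∀ u, u ∉ Icc (-1 : ℝ) 1 → K u = 0) (hKone : ∫ u, K u = 1) {n : ℕ}
    (hKord : ∀ j, 1 ≤ j → j ≤ n → ∫ u, u ^ j * K u = 0) (c : ℕ → ℝ) :
    ∫ u in (-1 : ℝ)..1, K u * ∑ k ∈ Finset.range (n + 1), c k * u ^ k = c 0 := by
  have hmoment : ∀ k : ℕ, ∫ u in (-1 : ℝ)..1, u ^ k * K u = ∫ u, u ^ k * K u := fun k =>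
    intervalIntegral.integral_eq_integral_of_forall_notMem_Icc (by norm_num) fun u hu => by
      simp only [hKsupp u hu, mul_zero]
  simp_rw [Finset.mul_sum, fun u k => show K u * (c k * u ^ k) = c k * (u ^ k * K u) by ring]
  rw [intervalIntegral.integral_finsetSum fun k _ =>
    (hK.continuousOn_mul (continuous_pow k).continuousOn).const_mul _, Finset.sum_eq_single 0]
  · have hmass := hmoment 0
    simp only [pow_zero, one_mul] at hmass
    simp [hmass, hKone]
  · intro k hk hk0
    rw [intervalIntegral.integral_const_mul, hmoment,
      hKord k (by omega) (by simpa [Nat.lt_succ_iff] using hk), mul_zero]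
  · simp

theorem intervalIntegral_mul_taylorWithinEval_eq (hK : IntervalIntegrable K volume (-1) 1)
    (hKsupp : ∀ u, u ∉ Icc (-1 : ℝ) 1 → K u = 0) (hKone : ∫ u, K u = 1) {n : ℕ}
    (hKord : ∀ j, 1 ≤ j → j ≤ n → ∫ u, u ^ j * K u = 0) (f : ℝ → ℝ) (s : Set ℝ) (t₀ h : ℝ) :
    ∫ u in (-1 : ℝ)..1, K u * taylorWithinEval f n s t₀ (t₀ + h * u) = f t₀ := by
  have hexpand : ∀ u, taylorWithinEval f n s t₀ (t₀ + h * u) = ∑ k ∈ Finset.range (n + 1),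
      ((k.factorial : ℝ)⁻¹ * h ^ k * iteratedDerivWithin k f s t₀) * u ^ k := fun u => by
    rw [taylor_within_apply]
    refine Finset.sum_congr rfl fun k _ => ?_
    rw [add_sub_cancel_left, smul_eq_mul, mul_pow]
    ring
  simp_rw [hexpand]
  rw [intervalIntegral_mul_sum_pow_eq_of_moments hK hKsupp hKone hKord]
  simp

end Kernel

/-- bias bound for kernel smoothing with a kernel of order `ℓ = ⌊β⌋`
over the Hölder class `Σ(β,L)`:
`|(1/h)∫₀¹ K((τ−t₀)/h) f(τ) dτ − f(t₀)| ≤ (L h^β/ℓ!)·∫_{−1}^{1} |K(u)||u|^β du`. -/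
theorem kernel_bias_bound (β L : ℝ) (hβ : 0 < β) (hL : 0 < L) (f K : ℝ → ℝ)
    (hf : HolderClassR β L f)
    (hKint : Integrable K)
    (hKsupp : ∀ u, u ∉ Icc (-1 : ℝ) 1 → K u = 0)
    (hKone : (∫ u, K u) = 1)
    (hKord : ∀ j, 1 ≤ j → j ≤ ⌊β⌋₊ → (∫ u, u ^ j * K u) = 0)
    (h t₀ : ℝ) (hh : h ∈ Ioc (0 : ℝ) (1 / 2)) (ht₀ : t₀ ∈ Icc h (1 - h)) :
    |(1 / h) * (∫ τ in (0:ℝ)..1, K ((τ - t₀) / h) * f τ) - f t₀| ≤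
      (L * h ^ β / (Nat.factorial ⌊β⌋₊ : ℝ)) *
        ∫ u in (-1 : ℝ)..1, |K u| * |u| ^ β := by
  have hh₀ : 0 < h := hh.1
  have hKi : IntervalIntegrable K volume (-1) 1 := hKint.intervalIntegrable
  have hmaps : MapsTo (fun u => t₀ + h * u) (Icc (-1) 1) (Icc 0 1) := fun u hu =>
    ⟨by nlinarith [hu.1, ht₀.1], by nlinarith [hu.2, ht₀.2]⟩
  have hfc : ContinuousOn (fun u => f (t₀ + h * u)) (uIcc (-1) 1) := by
    rw [uIcc_of_le (by norm_num)]
    exact (hf.continuousOn hβ).comp (by fun_prop) hmaps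
  have hPc : ContinuousOn (fun u => taylorWithinEval f ⌊β⌋₊ univ t₀ (t₀ + h * u)) (uIcc (-1) 1) :=
    ((continuous_taylorWithinEval f _ _ t₀).comp (by fun_prop)).continuousOn
  have htaylor : ∀ u ∈ Ioo (-1 : ℝ) 1, |f (t₀ + h * u) - taylorWithinEval f ⌊β⌋₊ univ t₀
      (t₀ + h * u)| ≤ L * h ^ β / (Nat.factorial ⌊β⌋₊ : ℝ) * |u| ^ β := fun u hu =>
    hf.abs_sub_taylorWithinEval_add_mul_le hβ hL.le hh₀ ⟨by linarith [ht₀.1], by linarith [ht₀.2]⟩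
      ⟨by nlinarith [hu.1, ht₀.1], by nlinarith [hu.2, ht₀.2]⟩
  rw [kernelSmooth_eq_intervalIntegral_mul_comp hKsupp f hh₀ ht₀,
    ← intervalIntegral_mul_taylorWithinEval_eq hKi hKsupp hKone hKord f univ t₀ h,
    ← intervalIntegral.integral_sub (hKi.mul_continuousOn hfc) (hKi.mul_continuousOn hPc)]
  simp_rw [← mul_sub]
  calc _ ≤ ∫ u in (-1 : ℝ)..1, |K u| * (L * h ^ β / (Nat.factorial ⌊β⌋₊ : ℝ) * |u| ^ β) :=
        abs_intervalIntegral_mul_le (by norm_num) hKi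
          (continuous_const.mul (continuous_abs.rpow_const fun _ => .inr hβ.le)).continuousOn
          htaylor
    _ = _ := by
        simp_rw [mul_left_comm |K _|]
        exact intervalIntegral.integral_const_mul _ _
end

section
/- Let m and r be even positive integers with r ≤ m and let γ > 0. Then there exists a finite set 𝒜⁰ of m×m real symmetric matrices, all of whose entries lie in {0, γ}, such that: (i) 𝒜⁰ contains the zero matrix; (ii) Card(𝒜⁰) ≥ 2^{mr/32} + 1; (iii) every A ∈ 𝒜⁰ has rank at most r; and (iv) any two distinct A₁, A₂ ∈ 𝒜⁰ satisfy ‖A₁ − A₂‖₂² ≥ (mr/16)·⌊m/r⌋·γ² ≥ γ²·m²/32, where ‖·‖₂ is the Frobenius norm. -/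
/-!
Gilbert's argument: a code in `{0,1}ⁿ` containing `0` that is maximal among those with minimum
distance `> ⌊n/8⌋` is covered by the Hamming balls of radius `⌊n/8⌋` around its words, so it has at
least `2ⁿ / V` words, where `3^(n - ⌊n/8⌋) V ≤ 4ⁿ` bounds the volume `V` of a ball; this exceeds
`2^(n/8) + 1` once `n ≥ 2`.

A word `ν` indexed by `(m/2) × (r/2)` becomes the `{0, γ}`-matrix `Â` made of `⌊m/r⌋` side-by-side
copies of `γ ν`, padded by zero columns. Its symmetric dilation `[[0, Â], [Âᵀ, 0]]` has rank at
most `r` because `Â` factors through `r/2` columns, and the squared Frobenius distance of two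
such matrices is `2 ⌊m/r⌋ γ²` times the Hamming distance of their words. For `m = r = 2` the code
has only two words, and the four diagonal `{0, γ}`-matrices are used instead.
-/

open Finset Matrix

namespace VarshamovGilbert

section Hamming

variable {ι β : Type*} [Fintype ι] [DecidableEq ι] [Fintype β] [DecidableEq β]

theorem exists_code_covering (x₀ : ι → β) (K : ℕ) :
    ∃ S : Finset (ι → β), x₀ ∈ S ∧
      (S : Set (ι → β)).Pairwise (fun u v => K < hammingDist u v) ∧
      ∀ x, ∃ u ∈ S, hammingDist x u ≤ K := by
  classical
  obtain ⟨S, hS, hmax⟩ := exists_max_image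
    {S : Finset (ι → β) | x₀ ∈ S ∧ (S : Set (ι → β)).Pairwise (fun u v => K < hammingDist u v)}
    card ⟨{x₀}, by simp⟩
  simp only [mem_filter, mem_univ, true_and] at hS hmax
  refine ⟨S, hS.1, hS.2, fun x => ?_⟩
  by_contra! hfar
  have hx : x ∉ S := fun hx => by simpa using hfar x hx
  have hins := hmax (insert x S) ⟨mem_insert_of_mem hS.1, by
    rw [coe_insert, Set.pairwise_insert]
    exact ⟨hS.2, fun u hu _ => ⟨hfar u hu, hammingDist_comm x u ▸ hfar u hu⟩⟩⟩
  rw [card_insert_of_notMem hx] at hins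
  omega

theorem card_hammingBall_le (u : ι → Bool) (K : ℕ) :
    #{x | hammingDist x u ≤ K} ≤ ∑ j ∈ range (K + 1), (Fintype.card ι).choose j := by
  classical
  calc #{x | hammingDist x u ≤ K}
      ≤ #((range (K + 1)).biUnion fun j => powersetCard j (univ : Finset ι)) := by
        refine card_le_card_of_injOn (fun x => ({i | x i ≠ u i} : Finset ι)) (fun x hx => ?_)
          (fun x _ y _ hxy => funext fun i => ?_)
        · simp only [coe_filter, mem_univ, true_and, Set.mem_ofPred_eq] at hx
          exact mem_biUnion.mpr ⟨_, mem_range.mpr (Nat.lt_succ_of_le hx),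
            mem_powersetCard.mpr ⟨subset_univ _, rfl⟩⟩
        · have hi := congrArg (i ∈ ·) hxy
          simp only [mem_filter, mem_univ, true_and] at hi
          revert hi; cases x i <;> cases y i <;> cases u i <;> simp
    _ ≤ ∑ j ∈ range (K + 1), #(powersetCard j (univ : Finset ι)) := card_biUnion_le
    _ = _ := by simp only [card_powersetCard, card_univ]

theorem exists_code_two_pow_le_card_mul (x₀ : ι → Bool) (K : ℕ) :
    ∃ S : Finset (ι → Bool), x₀ ∈ S ∧
      (S : Set (ι → Bool)).Pairwise (fun u v => K < hammingDist u v) ∧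
      2 ^ Fintype.card ι ≤ #S * ∑ j ∈ range (K + 1), (Fintype.card ι).choose j := by
  obtain ⟨S, hx₀, hsep, hcover⟩ := exists_code_covering x₀ K
  refine ⟨S, hx₀, hsep, ?_⟩
  calc 2 ^ Fintype.card ι = #(univ : Finset (ι → Bool)) := by simp
    _ ≤ #(S.biUnion fun u => {x | hammingDist x u ≤ K}) := card_le_card fun x _ => by
        simpa using hcover x
    _ ≤ _ := card_biUnion_le_card_mul _ _ _ fun u _ => card_hammingBall_le u K

end Hamming

theorem pow_sub_mul_sum_range_choose_le {a n K : ℕ} (ha : 1 ≤ a) (hK : K ≤ n) :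
    a ^ (n - K) * ∑ j ∈ range (K + 1), n.choose j ≤ (a + 1) ^ n := by
  rw [← add_comm 1 a, add_pow, mul_sum]
  calc ∑ j ∈ range (K + 1), a ^ (n - K) * n.choose j
      ≤ ∑ j ∈ range (K + 1), 1 ^ j * a ^ (n - j) * n.choose j := sum_le_sum fun j hj => by
        rw [one_pow, one_mul]
        exact Nat.mul_le_mul_right _ (pow_le_pow_right₀ ha (by simp at hj; omega))
    _ ≤ _ := sum_le_sum_of_subset (range_subset_range.mpr (by omega))

theorem two_rpow_add_one_mul_le {n : ℕ} (hn : 8 ≤ n) :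
    ((2 : ℝ) ^ ((n : ℝ) / 8) + 1) * 4 ^ n ≤ 2 ^ n * 3 ^ (n - n / 8) := by
  set t := (n : ℝ) / 8
  have ht : 1 ≤ t := by rw [le_div_iff₀ (by norm_num)]; exact_mod_cast hn
  have hpow : ∀ c : ℝ, 0 ≤ c → c ^ n = (c ^ 8) ^ t := fun c hc => by
    rw [← Real.rpow_natCast_mul hc, ← Real.rpow_natCast]; congr 1; simp [t]; ring
  have h2t : 2 ≤ (2 : ℝ) ^ t := by
    simpa using Real.rpow_le_rpow_of_exponent_le (by norm_num : (1 : ℝ) ≤ 2) ht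
  have h3 : ((3 : ℝ) ^ 7) ^ t ≤ 3 ^ (n - n / 8) := by
    rw [← Real.rpow_natCast_mul (by norm_num), ← Real.rpow_natCast]
    refine Real.rpow_le_rpow_of_exponent_le (by norm_num) ?_
    rw [Nat.cast_sub (Nat.div_le_self n 8)]
    have : ((n / 8 : ℕ) : ℝ) ≤ t := Nat.cast_div_le
    simp only [t] at this ⊢
    push_cast; linarith
  calc ((2 : ℝ) ^ t + 1) * 4 ^ n ≤ (2 ^ t * 2 ^ t) * (4 ^ 8) ^ t := by
        rw [hpow 4 (by norm_num)]; gcongr; nlinarith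
    _ = (4 * 4 ^ 8) ^ t := by
        rw [← Real.mul_rpow (by positivity) (by positivity),
          ← Real.mul_rpow (by positivity) (by positivity)]
        norm_num
    _ ≤ (2 ^ 8 * 3 ^ 7) ^ t := Real.rpow_le_rpow (by positivity) (by norm_num) (by linarith)
    _ = 2 ^ n * ((3 : ℝ) ^ 7) ^ t := by
        rw [Real.mul_rpow (by norm_num) (by norm_num), hpow 2 (by norm_num)]
    _ ≤ 2 ^ n * 3 ^ (n - n / 8) := by gcongr

theorem two_rpow_div_eight_add_one_le {n N : ℕ} (hn : 2 ≤ n)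
    (hN : 2 ^ n ≤ N * ∑ j ∈ range (n / 8 + 1), n.choose j) :
    (2 : ℝ) ^ ((n : ℝ) / 8) + 1 ≤ N := by
  rcases lt_or_ge n 8 with hsmall | hbig
  · have hK : n / 8 = 0 := by omega
    simp only [hK, zero_add, range_one, sum_singleton, Nat.choose_zero_right, mul_one] at hN
    have h2 : (2 : ℝ) ^ ((n : ℝ) / 8) ≤ 2 := by
      simpa using Real.rpow_le_rpow_of_exponent_le (by norm_num : (1 : ℝ) ≤ 2)
        (show (n : ℝ) / 8 ≤ 1 by rw [div_le_one (by norm_num)]; exact_mod_cast hsmall.le)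
    have h4 : (4 : ℝ) ≤ N := by
      calc (4 : ℝ) = 2 ^ 2 := by norm_num
        _ ≤ 2 ^ n := pow_le_pow_right₀ (by norm_num) hn
        _ ≤ N := by exact_mod_cast hN
    linarith
  · set V := ∑ j ∈ range (n / 8 + 1), n.choose j
    have hV : 0 < V := sum_pos' (fun _ _ => Nat.zero_le _) ⟨0, by simp⟩
    have htail : ((3 : ℝ) ^ (n - n / 8)) * V ≤ 4 ^ n := by
      exact_mod_cast pow_sub_mul_sum_range_choose_le (a := 3) (by norm_num) (Nat.div_le_self n 8)
    have hN' : (2 : ℝ) ^ n ≤ N * V := by exact_mod_cast hN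
    refine le_of_mul_le_mul_right ?_ (by positivity : (0 : ℝ) < 3 ^ (n - n / 8) * V)
    calc ((2 : ℝ) ^ ((n : ℝ) / 8) + 1) * (3 ^ (n - n / 8) * V)
        ≤ (2 ^ ((n : ℝ) / 8) + 1) * 4 ^ n := by gcongr
      _ ≤ 2 ^ n * 3 ^ (n - n / 8) := two_rpow_add_one_mul_le hbig
      _ ≤ N * V * 3 ^ (n - n / 8) := by gcongr
      _ = N * (3 ^ (n - n / 8) * V) := by ring

theorem exists_code {ι : Type*} [Fintype ι] [DecidableEq ι] (x₀ : ι → Bool)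
    (hι : 2 ≤ Fintype.card ι) :
    ∃ S : Finset (ι → Bool), x₀ ∈ S ∧ (2 : ℝ) ^ ((Fintype.card ι : ℝ) / 8) + 1 ≤ #S ∧
      (S : Set (ι → Bool)).Pairwise (fun u v => (Fintype.card ι : ℝ) / 8 ≤ hammingDist u v) := by
  obtain ⟨S, hx₀, hsep, hcard⟩ := exists_code_two_pow_le_card_mul x₀ (Fintype.card ι / 8)
  refine ⟨S, hx₀, two_rpow_div_eight_add_one_le hι hcard, hsep.mono' fun u v huv => ?_⟩
  have h8 : Fintype.card ι ≤ hammingDist u v * 8 := by omega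
  rw [div_le_iff₀ (by norm_num)]
  exact_mod_cast h8

section FrobeniusDist

variable {m n ι : Type*} [Fintype m] [Fintype n] [Fintype ι]

def frobeniusDistSq (A B : Matrix m n ℝ) : ℝ := ∑ i, ∑ j, (A i j - B i j) ^ 2

theorem frobeniusDistSq_reindex {m' n' : Type*} [Fintype m'] [Fintype n'] (e₁ : m ≃ m')
    (e₂ : n ≃ n') (A B : Matrix m n ℝ) :
    frobeniusDistSq (reindex e₁ e₂ A) (reindex e₁ e₂ B) = frobeniusDistSq A B := by
  simp only [frobeniusDistSq, reindex_apply, submatrix_apply]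
  rw [← e₁.sum_comp]
  exact sum_congr rfl fun i _ => by rw [← e₂.sum_comp]; simp

theorem frobeniusDistSq_diagonal [DecidableEq m] (d₁ d₂ : m → ℝ) :
    frobeniusDistSq (diagonal d₁) (diagonal d₂) = ∑ i, (d₁ i - d₂ i) ^ 2 := by
  refine sum_congr rfl fun i _ => ?_
  rw [Fintype.sum_eq_single i fun j hj => by simp [diagonal_apply_ne _ (Ne.symm hj)]]
  simp

theorem sum_sq_sub_ite_eq_mul_hammingDist [DecidableEq ι] (γ : ℝ) (ν₁ ν₂ : ι → Bool) :
    ∑ i, ((if ν₁ i then γ else 0) - (if ν₂ i then γ else 0)) ^ 2 = γ ^ 2 * hammingDist ν₁ ν₂ := by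
  have hterm : ∀ i, ((if ν₁ i then γ else 0) - (if ν₂ i then γ else 0)) ^ 2 =
      if ν₁ i ≠ ν₂ i then γ ^ 2 else 0 := fun i => by
    cases ν₁ i <;> cases ν₂ i <;> simp
  rw [Fintype.sum_congr _ _ hterm, sum_ite, sum_const_zero, add_zero, sum_const, nsmul_eq_mul,
    mul_comm]
  rfl

theorem injective_of_frobeniusDistSq_eq [DecidableEq ι] {f : (ι → Bool) → Matrix m n ℝ} {c : ℝ}
    (hc : c ≠ 0) (hf : ∀ ν₁ ν₂, frobeniusDistSq (f ν₁) (f ν₂) = c * hammingDist ν₁ ν₂) :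
    Function.Injective f := fun ν₁ ν₂ h => by
  have hdist := hf ν₁ ν₂
  simp only [h, frobeniusDistSq, sub_self, ne_eq, OfNat.ofNat_ne_zero, not_false_eq_true,
    zero_pow, sum_const_zero, zero_eq_mul, hc, false_or, Nat.cast_eq_zero] at hdist
  exact hammingDist_eq_zero.mp hdist

end FrobeniusDist

section Construction

variable {m n p τ R : Type*}

def indicatorMatrix (γ : ℝ) (ν : m × p → Bool) : Matrix m p ℝ :=
  of fun a t => if ν (a, t) then γ else 0

theorem frobeniusDistSq_indicatorMatrix [Fintype m] [Fintype p] [DecidableEq m] [DecidableEq p]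
    (γ : ℝ) (ν₁ ν₂ : m × p → Bool) :
    frobeniusDistSq (indicatorMatrix γ ν₁) (indicatorMatrix γ ν₂) = γ ^ 2 * hammingDist ν₁ ν₂ := by
  rw [← sum_sq_sub_ite_eq_mul_hammingDist, Fintype.sum_prod_type]
  rfl

def tile [Zero R] (q : ℕ) (τ : Type*) (E : Matrix m p R) : Matrix m ((Fin q × p) ⊕ τ) R :=
  fromCols (E.submatrix id Prod.snd) 0

theorem tile_eq_mul [Fintype p] [CommRing R] [DecidableEq p] (q : ℕ) (E : Matrix m p R) :
    tile q τ E = E * tile q τ (1 : Matrix p p R) := by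
  ext a (⟨j, t⟩ | c) <;> simp [tile, mul_apply, one_apply]

theorem frobeniusDistSq_tile [Fintype m] [Fintype p] [Fintype τ] (q : ℕ) (E₁ E₂ : Matrix m p ℝ) :
    frobeniusDistSq (tile q τ E₁) (tile q τ E₂) = q * frobeniusDistSq E₁ E₂ := by
  simp [frobeniusDistSq, tile, Fintype.sum_sum_type, Fintype.sum_prod_type, mul_sum]

theorem tile_apply_mem [Zero R] {T : Set R} (h0 : 0 ∈ T) (q : ℕ) {E : Matrix m p R}
    (hE : ∀ a t, E a t ∈ T) (a : m) (c : (Fin q × p) ⊕ τ) : tile q τ E a c ∈ T := by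
  rcases c with c | c
  exacts [hE a c.2, h0]

def symmDilation [Zero R] (B : Matrix m n R) : Matrix (m ⊕ n) (m ⊕ n) R :=
  fromBlocks 0 B Bᵀ 0

theorem isSymm_symmDilation [Zero R] (B : Matrix m n R) : (symmDilation B).IsSymm :=
  IsSymm.fromBlocks isSymm_zero rfl isSymm_zero

theorem symmDilation_apply_mem [Zero R] {T : Set R} (h0 : 0 ∈ T) {B : Matrix m n R}
    (hB : ∀ a c, B a c ∈ T) (i j : m ⊕ n) : symmDilation B i j ∈ T := by
  rcases i with a | c <;> rcases j with a' | c'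
  exacts [h0, hB a c', hB a' c, h0]

theorem frobeniusDistSq_symmDilation [Fintype m] [Fintype n] (B₁ B₂ : Matrix m n ℝ) :
    frobeniusDistSq (symmDilation B₁) (symmDilation B₂) = 2 * frobeniusDistSq B₁ B₂ := by
  simp only [frobeniusDistSq, symmDilation, Fintype.sum_sum_type, fromBlocks_apply₁₁,
    fromBlocks_apply₁₂, fromBlocks_apply₂₁, fromBlocks_apply₂₂, transpose_apply, Matrix.zero_apply,
    sub_self, ne_eq, OfNat.ofNat_ne_zero, not_false_eq_true, zero_pow, sum_const_zero, zero_add,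
    add_zero]
  rw [sum_comm (f := fun c a => (B₁ a c - B₂ a c) ^ 2)]
  ring

theorem rank_symmDilation_mul_le [Fintype m] [Fintype n] [Fintype p] [CommRing R]
    [StrongRankCondition R] (E : Matrix m p R) (W : Matrix p n R) :
    (symmDilation (E * W)).rank ≤ 2 * Fintype.card p := by
  have hfactor : symmDilation (E * W) = fromBlocks E 0 0 Wᵀ * fromBlocks 0 W Eᵀ 0 := by
    simp [symmDilation, fromBlocks_multiply, transpose_mul]
  rw [hfactor]
  calc _ ≤ (fromBlocks E 0 0 Wᵀ).rank := rank_mul_le_left _ _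
    _ ≤ Fintype.card (p ⊕ p) := rank_le_card_width _
    _ = 2 * Fintype.card p := by rw [Fintype.card_sum, two_mul]

end Construction

section Packing

variable {m p τ ι : Type*}

def packingMatrix (q : ℕ) (e : m ⊕ ((Fin q × p) ⊕ τ) ≃ ι) (γ : ℝ) (ν : m × p → Bool) :
    Matrix ι ι ℝ :=
  reindex e e (symmDilation (tile q τ (indicatorMatrix γ ν)))

theorem packingMatrix_false (q : ℕ) (e : m ⊕ ((Fin q × p) ⊕ τ) ≃ ι) (γ : ℝ) :
    packingMatrix q e γ (fun _ => false) = 0 := by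
  have hzero : indicatorMatrix γ (fun _ : m × p => false) = 0 := by
    ext a t
    simp [indicatorMatrix]
  simp [packingMatrix, hzero, tile, symmDilation]

theorem isSymm_packingMatrix (q : ℕ) (e : m ⊕ ((Fin q × p) ⊕ τ) ≃ ι) (γ : ℝ)
    (ν : m × p → Bool) : (packingMatrix q e γ ν).IsSymm :=
  (isSymm_symmDilation _).reindex e

theorem packingMatrix_apply_mem (q : ℕ) (e : m ⊕ ((Fin q × p) ⊕ τ) ≃ ι) (γ : ℝ)
    (ν : m × p → Bool) (i j : ι) : packingMatrix q e γ ν i j ∈ ({0, γ} : Set ℝ) := by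
  refine symmDilation_apply_mem (by simp) (tile_apply_mem (by simp) q fun a t => ?_) _ _
  by_cases h : ν (a, t) <;> simp [indicatorMatrix, h]

theorem rank_packingMatrix_le [Fintype m] [Fintype p] [Fintype τ] [Fintype ι] [DecidableEq p]
    (q : ℕ) (e : m ⊕ ((Fin q × p) ⊕ τ) ≃ ι) (γ : ℝ) (ν : m × p → Bool) :
    (packingMatrix q e γ ν).rank ≤ 2 * Fintype.card p := by
  rw [packingMatrix, rank_reindex, tile_eq_mul]
  exact rank_symmDilation_mul_le _ _

theorem frobeniusDistSq_packingMatrix [Fintype m] [Fintype p] [Fintype τ] [Fintype ι]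
    [DecidableEq m] [DecidableEq p] (q : ℕ) (e : m ⊕ ((Fin q × p) ⊕ τ) ≃ ι) (γ : ℝ)
    (ν₁ ν₂ : m × p → Bool) :
    frobeniusDistSq (packingMatrix q e γ ν₁) (packingMatrix q e γ ν₂) =
      2 * q * γ ^ 2 * hammingDist ν₁ ν₂ := by
  rw [packingMatrix, packingMatrix, frobeniusDistSq_reindex, frobeniusDistSq_symmDilation,
    frobeniusDistSq_tile, frobeniusDistSq_indicatorMatrix]
  ring

end Packing

def IsLowRankPacking (m r : ℕ) (γ : ℝ) (𝒜 : Finset (Matrix (Fin m) (Fin m) ℝ)) : Prop :=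
  0 ∈ 𝒜 ∧ (2 : ℝ) ^ ((m * r : ℝ) / 32) + 1 ≤ #𝒜 ∧ (∀ A ∈ 𝒜, A.IsSymm) ∧
    (∀ A ∈ 𝒜, ∀ i j, A i j = 0 ∨ A i j = γ) ∧ (∀ A ∈ 𝒜, A.rank ≤ r) ∧
    ∀ A₁ ∈ 𝒜, ∀ A₂ ∈ 𝒜, A₁ ≠ A₂ →
      (m * r : ℝ) / 16 * (m / r : ℕ) * γ ^ 2 ≤ frobeniusDistSq A₁ A₂

theorem exists_isLowRankPacking {k s : ℕ} (hs : 0 < s) (hsk : s ≤ k) (hks : 2 ≤ k * s) {γ : ℝ}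
    (hγ : γ ≠ 0) : ∃ 𝒜, IsLowRankPacking (k + k) (s + s) γ 𝒜 := by
  set q := (k + k) / (s + s)
  have hq : 0 < q := Nat.div_pos (by omega) (by omega)
  have hqs : q * s ≤ k := by
    have : q * (s + s) ≤ k + k := Nat.div_mul_le_self _ _
    linarith
  let e : Fin k ⊕ ((Fin q × Fin s) ⊕ Fin (k - q * s)) ≃ Fin (k + k) :=
    Fintype.equivFinOfCardEq <| by
      simp only [Fintype.card_sum, Fintype.card_prod, Fintype.card_fin]
      omega
  set A := packingMatrix q e γ
  have hinj : Function.Injective A :=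
    injective_of_frobeniusDistSq_eq (by positivity) (frobeniusDistSq_packingMatrix q e γ)
  obtain ⟨S, h0, hcard, hsep⟩ :=
    exists_code (ι := Fin k × Fin s) (fun _ => false) (by simpa using hks)
  refine ⟨S.image A, mem_image.mpr ⟨_, h0, packingMatrix_false q e γ⟩, ?_, ?_, ?_, ?_, ?_⟩
  · rw [card_image_of_injective _ hinj]
    convert hcard using 3
    simp only [Fintype.card_prod, Fintype.card_fin]
    push_cast; ring
  · simpa using fun ν _ => isSymm_packingMatrix q e γ ν
  · simpa using fun ν _ => packingMatrix_apply_mem q e γ ν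
  · simpa [two_mul] using fun ν _ => rank_packingMatrix_le q e γ ν
  · simp only [forall_mem_image]
    intro ν₁ hν₁ ν₂ hν₂ hne
    rw [frobeniusDistSq_packingMatrix]
    have hd := hsep hν₁ hν₂ (fun h => hne (congrArg A h))
    simp only [Fintype.card_prod, Fintype.card_fin, Nat.cast_mul] at hd
    calc _ = 2 * (q : ℝ) * γ ^ 2 * ((k : ℝ) * s / 8) := by push_cast; ring
      _ ≤ _ := by gcongr

theorem exists_isLowRankPacking_two {γ : ℝ} (hγ : γ ≠ 0) : ∃ 𝒜, IsLowRankPacking 2 2 γ 𝒜 := by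
  set D := fun ν : Fin 2 → Bool => diagonal fun i => if ν i then γ else 0
  have hdist : ∀ ν₁ ν₂, frobeniusDistSq (D ν₁) (D ν₂) = γ ^ 2 * hammingDist ν₁ ν₂ :=
    fun ν₁ ν₂ => by rw [frobeniusDistSq_diagonal, sum_sq_sub_ite_eq_mul_hammingDist]
  have hinj := injective_of_frobeniusDistSq_eq (pow_ne_zero 2 hγ) hdist
  refine ⟨univ.image D, mem_image.mpr ⟨fun _ => false, mem_univ _, by simp [D]⟩, ?_, ?_, ?_, ?_, ?_⟩
  · rw [card_image_of_injective _ hinj]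
    have : (2 : ℝ) ^ ((2 * 2 : ℝ) / 32) ≤ 2 ^ (1 : ℝ) :=
      Real.rpow_le_rpow_of_exponent_le (by norm_num) (by norm_num)
    norm_num at this ⊢
    linarith
  · simp [D, isSymm_diagonal]
  · simp only [forall_mem_image, mem_univ, true_implies, D]
    intro ν i j
    rcases eq_or_ne i j with rfl | hij
    · by_cases h : ν i <;> simp [h]
    · simp [hij]
  · simpa using fun ν => rank_le_card_width (D ν)
  · simp only [forall_mem_image, mem_univ, true_implies, hdist]
    intro ν₁ ν₂ hne
    have : 1 ≤ hammingDist ν₁ ν₂ := hammingDist_pos.mpr fun h => hne (congrArg D h)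
    have : (1 : ℝ) ≤ hammingDist ν₁ ν₂ := by exact_mod_cast this
    norm_num
    nlinarith [sq_nonneg γ]

theorem sq_mul_div_le_mul_div {m r : ℕ} (hr : 0 < r) (hrm : r ≤ m) (γ : ℝ) :
    γ ^ 2 * (m : ℝ) ^ 2 / 32 ≤ (m * r : ℝ) / 16 * (m / r : ℕ) * γ ^ 2 := by
  have hm : m ≤ 2 * (m / r * r) := by
    have := Nat.lt_div_mul_add (a := m) hr
    have := Nat.le_mul_of_pos_left r (Nat.div_pos hrm hr)
    omega
  have hm' : (m : ℝ) ≤ 2 * ((m / r : ℕ) * r) := by exact_mod_cast hm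
  have hγ := sq_nonneg γ
  nlinarith [mul_le_mul_of_nonneg_left hm' (mul_nonneg hγ (Nat.cast_nonneg m))]

end VarshamovGilbert

open VarshamovGilbert in
theorem varshamov_gilbert_packing_general (m r : ℕ) (hm : Even m) (hr : Even r)
    (hr0 : 0 < r) (hrm : r ≤ m) (γ : ℝ) (hγ : 0 < γ) :
    ∃ 𝒜 : Finset (Matrix (Fin m) (Fin m) ℝ),
      (0 : Matrix (Fin m) (Fin m) ℝ) ∈ 𝒜 ∧
      (2 : ℝ) ^ ((m * r : ℝ) / 32) + 1 ≤ (𝒜.card : ℝ) ∧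
      (∀ A ∈ 𝒜, A.IsSymm) ∧
      (∀ A ∈ 𝒜, ∀ i j, A i j = 0 ∨ A i j = γ) ∧
      (∀ A ∈ 𝒜, A.rank ≤ r) ∧
      (∀ A₁ ∈ 𝒜, ∀ A₂ ∈ 𝒜, A₁ ≠ A₂ →
        ((m * r : ℝ) / 16) * ((m / r : ℕ) : ℝ) * γ ^ 2 ≤
          ∑ i, ∑ j, (A₁ i j - A₂ i j) ^ 2) ∧
      γ ^ 2 * (m : ℝ) ^ 2 / 32 ≤ ((m * r : ℝ) / 16) * ((m / r : ℕ) : ℝ) * γ ^ 2 := by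
  obtain ⟨𝒜, h0, hcard, hsymm, hentries, hrank, hsep⟩ : ∃ 𝒜, IsLowRankPacking m r γ 𝒜 := by
    obtain ⟨k, rfl⟩ := hm
    obtain ⟨s, rfl⟩ := hr
    by_cases hks : 2 ≤ k * s
    · exact exists_isLowRankPacking (by omega) (by omega) hks hγ.ne'
    · obtain ⟨rfl, rfl⟩ : k = 1 ∧ s = 1 := by
        have := Nat.le_mul_of_pos_right k (show 0 < s by omega)
        omega
      exact exists_isLowRankPacking_two hγ.ne'
  exact ⟨𝒜, h0, hcard, hsymm, hentries, hrank, hsep, sq_mul_div_le_mul_div hr0 hrm γ⟩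

/-- the Varshamov–Gilbert packing set of low rank symmetric matrices.
For even `m, r` with `r ≤ m` and `γ > 0` there is a finite set `𝒜⁰` of `m×m` real
symmetric matrices with entries in `{0, γ}`, containing `0`, of cardinality at least
`2^{mr/32} + 1`, all of rank at most `r`, any two distinct members being
`(mr/16)·⌊m/r⌋·γ² ≥ γ²m²/32`-separated in squared Frobenius norm. -/
theorem varshamov_gilbert_packing (m r : ℕ) (hm : Even m) (hr : Even r)
    (hm0 : 0 < m) (hr0 : 0 < r) (hrm : r ≤ m) (γ : ℝ) (hγ : 0 < γ) :
    ∃ 𝒜 : Finset (Matrix (Fin m) (Fin m) ℝ),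
      (0 : Matrix (Fin m) (Fin m) ℝ) ∈ 𝒜 ∧
      (2 : ℝ) ^ ((m * r : ℝ) / 32) + 1 ≤ (𝒜.card : ℝ) ∧
      (∀ A ∈ 𝒜, A.IsSymm) ∧
      (∀ A ∈ 𝒜, ∀ i j, A i j = 0 ∨ A i j = γ) ∧
      (∀ A ∈ 𝒜, A.rank ≤ r) ∧
      (∀ A₁ ∈ 𝒜, ∀ A₂ ∈ 𝒜, A₁ ≠ A₂ →
        ((m * r : ℝ) / 16) * ((m / r : ℕ) : ℝ) * γ ^ 2 ≤
          ∑ i, ∑ j, (A₁ i j - A₂ i j) ^ 2) ∧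
      γ ^ 2 * (m : ℝ) ^ 2 / 32 ≤ ((m * r : ℝ) / 16) * ((m / r : ℕ) : ℝ) * γ ^ 2 :=
  varshamov_gilbert_packing_general m r hm hr hr0 hrm γ hγ
end
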